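/- Let R be a commutative ring, λ, a ∈ R, and suppose the image of a is invertible in R/(λ). Then the R-algebra D = R[U,V, 1/(a+λU)] is faithfully flat over R. -/
import Mathlib


noncomputable section

/-- The algebra `D = R[U,V, 1/(a+λU)]`. -/
abbrev DA (R : Type*) [CommRing R] (lam a : R) : Type _ :=
  Localization.Away
    (MvPolynomial.C a + MvPolynomial.C lam * MvPolynomial.X 0 : MvPolynomial (Fin 2) R)

/-- if the image of `a` is invertible in `R/(λ)`, then
`D = R[U,V, 1/(a+λU)]` is faithfully flat over `R`. -/
theorem stmt12 (R : Type*) [CommRing R] (lam a : R)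
    (ha : IsUnit (Ideal.Quotient.mk (Ideal.span ({lam} : Set R)) a)) :
    Module.FaithfullyFlat R (DA R lam a) := by
  set P := MvPolynomial (Fin 2) R with hP
  set f : P := MvPolynomial.C a + MvPolynomial.C lam * MvPolynomial.X 0 with hf
  have flat : Module.Flat R (DA R lam a) := Module.Flat.trans R P (DA R lam a)
  refine { toFlat := flat, submodule_ne_top := ?_ }
  intro m hm rid
  rw [Ideal.smul_top_eq_map] at rid
  have hmap : m.map (algebraMap R (DA R lam a)) = ⊤ := by
    rw [← Submodule.restrictScalars_inj R]; simpa using rid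
  -- set up the quotient picture
  haveI := hm
  let P' := MvPolynomial (Fin 2) (R ⧸ m)
  let g : P →+* P' := MvPolynomial.map (Ideal.Quotient.mk m)
  set f' : P' := g f with hf'
  -- f' ≠ 0
  have hc1 : g (MvPolynomial.C a) = MvPolynomial.C ((Ideal.Quotient.mk m) a) :=
    MvPolynomial.map_C _ a
  have hc2 : g (MvPolynomial.C lam) = MvPolynomial.C ((Ideal.Quotient.mk m) lam) :=
    MvPolynomial.map_C _ lam
  have hx : g (MvPolynomial.X 0) = MvPolynomial.X 0 := MvPolynomial.map_X _ 0
  have hf'eq : f' = MvPolynomial.C ((Ideal.Quotient.mk m) a) +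
      MvPolynomial.C ((Ideal.Quotient.mk m) lam) * MvPolynomial.X 0 := by
    rw [hf', hf, map_add, map_mul, hc1, hc2, hx]
  have hane : f' ≠ 0 := by
    intro h0
    rw [hf'eq] at h0
    have h1 : (Ideal.Quotient.mk m) a = 0 := by
      have := congrArg (MvPolynomial.eval (fun _ => 0)) h0
      simpa using this
    have h2 : (Ideal.Quotient.mk m) lam = 0 := by
      have := congrArg (MvPolynomial.eval (fun _ => 1)) h0
      simpa [h1] using this
    have hamem : a ∈ m := by rwa [Ideal.Quotient.eq_zero_iff_mem] at h1
    have hlmem : lam ∈ m := by rwa [Ideal.Quotient.eq_zero_iff_mem] at h2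
    obtain ⟨c, hc⟩ := isUnit_iff_exists_inv.mp ha
    obtain ⟨b, rfl⟩ := Ideal.Quotient.mk_surjective c
    rw [← map_mul, ← map_one (Ideal.Quotient.mk _), Ideal.Quotient.mk_eq_mk_iff_sub_mem] at hc
    have hspan : Ideal.span ({lam} : Set R) ≤ m := by
      rwa [Ideal.span_le, Set.singleton_subset_iff]
    have h1m : (1 : R) ∈ m := by
      have := hspan hc
      have hab : a * b ∈ m := m.mul_mem_right b hamem
      simpa using m.sub_mem hab this
    exact hm.ne_top ((Ideal.eq_top_iff_one m).mpr h1m)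
  let K := Localization.Away f'
  haveI : Nontrivial K := by
    have : Function.Injective (algebraMap P' K) :=
      IsLocalization.injective K (powers_le_nonZeroDivisors_of_noZeroDivisors hane)
    exact this.nontrivial
  have hu : IsUnit (((algebraMap P' K).comp g) f) := by
    simpa using IsLocalization.Away.algebraMap_isUnit (S := K) f'
  let φ : DA R lam a →+* K := Localization.awayLift ((algebraMap P' K).comp g) f hu
  have hφ : φ.comp (algebraMap P (DA R lam a)) = (algebraMap P' K).comp g :=
    IsLocalization.Away.lift_comp (x := f) hu
  have hzero : ∀ r ∈ m, φ (algebraMap R (DA R lam a) r) = 0 := by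
    intro r hr
    have : algebraMap R (DA R lam a) r = algebraMap P (DA R lam a) (MvPolynomial.C r) :=
      IsScalarTower.algebraMap_apply R P (DA R lam a) r
    rw [this, ← RingHom.comp_apply, hφ, RingHom.comp_apply]
    have hg0 : g (MvPolynomial.C r) = 0 := by
      rw [show g (MvPolynomial.C r) = MvPolynomial.C ((Ideal.Quotient.mk m) r) from
        MvPolynomial.map_C _ r, Ideal.Quotient.eq_zero_iff_mem.mpr hr, MvPolynomial.C_0]
    rw [hg0, map_zero]
  have h2 : Ideal.map φ (m.map (algebraMap R (DA R lam a))) = ⊤ := by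
    rw [hmap, Ideal.map_top]
  rw [Ideal.map_map] at h2
  have h3 : Ideal.map (φ.comp (algebraMap R (DA R lam a))) m ≤ ⊥ := by
    rw [Ideal.map_le_iff_le_comap]
    intro r hr
    simpa [Ideal.mem_comap] using hzero r hr
  rw [h2] at h3
  have h4 : (1 : K) ∈ (⊥ : Ideal K) := h3 Submodule.mem_top
  exact one_ne_zero (Ideal.mem_bot.mp h4)
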